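/- arXiv:2403.18642 — 8 statements merged into one kernel-verified Lean document; each statement's English description precedes it below -/
import Mathlib

section
/- The PTA Kemeny rule satisfies PTA Condorcet consistency: if S is a schedule minimizing the weighted Kendall tau score Δ_PTA(·,P) over all schedules, and a PTA Condorcet consistent schedule exists for profile P, then S is PTA Condorcet consistent, i.e., for every pair of tasks a, b, if at least (p_a/(p_a+p_b))·v voters schedule a before b in their preferences then a is scheduled before b in S. -/
/-!
Write `w a b` for the weighted number of voters who disagree with scheduling `a` before `b`.
The score of a schedule splits over unordered pairs `{a, b}`, each pair costing `w a b` or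
`w b a` according to its orientation, so `∑ min (w a b) (w b a)` is a lower bound that is
attained exactly by the schedules orienting every pair in a cheapest direction. The Condorcet
threshold for `(a, b)` is equivalent to `w a b ≤ w b a`; a Condorcet consistent schedule
therefore attains the bound, and it also rules out ties `w a b = w b a`, since then it would
have to put `a` before `b` and `b` before `a`. Hence a minimizer attains the bound too, and
with ties excluded its orientation of every pair is forced to be the Condorcet one.
-/

/-- Weighted Kendall tau (PTA Kemeny) score of schedule `S` w.r.t. profile `P`:
for each voter and each pair on which `S` places `a` before `b` but the voter places
`b` before `a`, count `p a`. -/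
noncomputable def deltaPTA {n v : ℕ} (p : Fin n → ℝ) (P : Fin v → Equiv.Perm (Fin n))
    (S : Equiv.Perm (Fin n)) : ℝ :=
  ∑ k, ∑ a, ∑ b, if S a < S b ∧ P k b < P k a then p a else 0

/-- `S` is PTA Condorcet consistent with profile `P`: whenever at least
`(p a/(p a + p b))·v` voters schedule `a` before `b`, `a` is before `b` in `S`. -/
def PTACondorcet {n v : ℕ} (p : Fin n → ℝ) (P : Fin v → Equiv.Perm (Fin n))
    (S : Equiv.Perm (Fin n)) : Prop :=
  ∀ a b : Fin n, a ≠ b →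
    p a / (p a + p b) * v ≤ ((Finset.univ.filter (fun k => P k a < P k b)).card : ℝ) →
    S a < S b

open Finset

section Orientation

variable {α β : Type*} [LinearOrder β] (w : α → α → ℝ)

def orientationCost [Fintype α] (S : α → β) : ℝ :=
  ∑ a, ∑ b, if S a < S b then w a b else 0

def pairCost (S : α → β) (a b : α) : ℝ :=
  (if S a < S b then w a b else 0) + if S b < S a then w b a else 0

theorem two_mul_orientationCost [Fintype α] (S : α → β) :
    2 * orientationCost w S = ∑ a, ∑ b, pairCost w S a b := by
  simp only [pairCost, sum_add_distrib]
  rw [sum_comm (f := fun a b => if S b < S a then w b a else 0), orientationCost, two_mul]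

variable {w}

theorem pairCost_of_lt {S : α → β} {a b : α} (h : S a < S b) : pairCost w S a b = w a b := by
  simp [pairCost, h, h.not_gt]

theorem pairCost_self (S : α → β) (a : α) : pairCost w S a a = 0 := by
  simp [pairCost]

theorem pairCost_comm (S : α → β) (a b : α) : pairCost w S a b = pairCost w S b a :=
  add_comm _ _

theorem min_le_pairCost (hw : ∀ a, w a a = 0) {S : α → β} (hS : Function.Injective S)
    (a b : α) : min (w a b) (w b a) ≤ pairCost w S a b := by
  rcases lt_trichotomy (S a) (S b) with h | h | h
  · exact (pairCost_of_lt h).symm ▸ min_le_left _ _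
  · simp [hS h, hw, pairCost_self]
  · exact (pairCost_comm S a b ▸ pairCost_of_lt h).symm ▸ min_le_right _ _

theorem pairCost_eq_min_of_orientationCost_le [Fintype α] (hw : ∀ a, w a a = 0) {S S₀ : α → β}
    (hS : Function.Injective S) (hS₀ : ∀ a b, pairCost w S₀ a b = min (w a b) (w b a))
    (hle : orientationCost w S ≤ orientationCost w S₀) (a b : α) :
    pairCost w S a b = min (w a b) (w b a) := by
  have hrow : ∀ a, ∑ b, min (w a b) (w b a) ≤ ∑ b, pairCost w S a b :=
    fun a => sum_le_sum fun b _ => min_le_pairCost hw hS a b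
  have htotal : ∑ a, ∑ b, min (w a b) (w b a) = ∑ a, ∑ b, pairCost w S a b := by
    refine le_antisymm (sum_le_sum fun a _ => hrow a) ?_
    simp only [← hS₀, ← two_mul_orientationCost]
    linarith
  have hrow_eq := (sum_eq_sum_iff_of_le fun a _ => hrow a).mp htotal a (mem_univ a)
  exact ((sum_eq_sum_iff_of_le fun b _ => min_le_pairCost hw hS a b).mp hrow_eq b
    (mem_univ b)).symm

end Orientation

section Kemeny

variable {n v : ℕ} (p : Fin n → ℝ) (P : Fin v → Equiv.Perm (Fin n))

noncomputable def kemenyWeight (a b : Fin n) : ℝ :=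
  (#{k | P k b < P k a} : ℝ) * p a

theorem kemenyWeight_self (a : Fin n) : kemenyWeight p P a a = 0 := by
  simp [kemenyWeight]

theorem deltaPTA_eq_orientationCost (S : Equiv.Perm (Fin n)) :
    deltaPTA p P S = orientationCost (kemenyWeight p P) S := by
  unfold deltaPTA orientationCost
  rw [sum_comm]
  refine sum_congr rfl fun a _ => ?_
  rw [sum_comm]
  refine sum_congr rfl fun b _ => ?_
  by_cases h : S a < S b
  · simp only [h, true_and, if_true, kemenyWeight, ← sum_filter, sum_const, nsmul_eq_mul]
  · simp [h]

variable {P} in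
theorem card_before_add_card_before {a b : Fin n} (hab : a ≠ b) :
    #{k | P k a < P k b} + #{k | P k b < P k a} = v := by
  have hswap : (univ.filter fun k => P k b < P k a) = univ.filter fun k => ¬ P k a < P k b :=
    filter_congr fun k _ => by
      rw [not_lt]
      exact ⟨le_of_lt, fun h => h.lt_of_ne ((P k).injective.ne hab.symm)⟩
  rw [hswap, card_filter_add_card_filter_not, card_univ, Fintype.card_fin]

variable {p} in
theorem condorcet_threshold_iff (hp : ∀ i, 0 < p i) {a b : Fin n} (hab : a ≠ b) :
    p a / (p a + p b) * v ≤ (#{k | P k a < P k b} : ℝ) ↔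
      kemenyWeight p P a b ≤ kemenyWeight p P b a := by
  have hsum : 0 < p a + p b := add_pos (hp a) (hp b)
  have hv : (#{k | P k a < P k b} : ℝ) + #{k | P k b < P k a} = v := by
    exact_mod_cast card_before_add_card_before hab
  rw [kemenyWeight, kemenyWeight, div_mul_eq_mul_div, div_le_iff₀ hsum, ← hv]
  constructor <;> intro h <;> linarith

variable {p P}

theorem PTACondorcet.kemenyWeight_lt {S₀ : Equiv.Perm (Fin n)} (hS₀ : PTACondorcet p P S₀)
    (hp : ∀ i, 0 < p i) {a b : Fin n} (hab : a ≠ b)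
    (hle : kemenyWeight p P a b ≤ kemenyWeight p P b a) :
    kemenyWeight p P a b < kemenyWeight p P b a := by
  refine lt_of_not_ge fun hge => ?_
  have hab' := hS₀ a b hab ((condorcet_threshold_iff P hp hab).mpr hle)
  have hba := hS₀ b a hab.symm ((condorcet_threshold_iff P hp hab.symm).mpr hge)
  exact hab'.asymm hba

theorem PTACondorcet.pairCost_eq_min {S₀ : Equiv.Perm (Fin n)} (hS₀ : PTACondorcet p P S₀)
    (hp : ∀ i, 0 < p i) (a b : Fin n) :
    pairCost (kemenyWeight p P) S₀ a b =
      min (kemenyWeight p P a b) (kemenyWeight p P b a) := by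
  obtain rfl | hab := eq_or_ne a b
  · simp [pairCost_self, kemenyWeight_self]
  rcases le_total (kemenyWeight p P a b) (kemenyWeight p P b a) with h | h
  · rw [pairCost_of_lt (hS₀ a b hab ((condorcet_threshold_iff P hp hab).mpr h)), min_eq_left h]
  · rw [pairCost_comm, pairCost_of_lt (hS₀ b a hab.symm
      ((condorcet_threshold_iff P hp hab.symm).mpr h)), min_eq_right h]

end Kemeny

/-- The PTA Kemeny rule is PTA Condorcet consistent: any minimizer of the weighted Kendall
tau score is PTA Condorcet consistent, provided such a schedule exists. -/
theorem stmt3 {n v : ℕ} (p : Fin n → ℝ) (hp : ∀ i, 0 < p i)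
    (P : Fin v → Equiv.Perm (Fin n)) (S : Equiv.Perm (Fin n))
    (hmin : ∀ S', deltaPTA p P S ≤ deltaPTA p P S')
    (hex : ∃ S₀, PTACondorcet p P S₀) :
    PTACondorcet p P S := by
  obtain ⟨S₀, hS₀⟩ := hex
  have hopt : ∀ a b, pairCost (kemenyWeight p P) S a b =
      min (kemenyWeight p P a b) (kemenyWeight p P b a) := by
    refine pairCost_eq_min_of_orientationCost_le (kemenyWeight_self p P) S.injective
      (hS₀.pairCost_eq_min hp) ?_
    simpa only [deltaPTA_eq_orientationCost] using hmin S₀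
  intro a b hab hthr
  have hlt := hS₀.kemenyWeight_lt hp hab ((condorcet_threshold_iff P hp hab).mp hthr)
  refine (lt_or_gt_of_ne (S.injective.ne hab)).resolve_right fun hba => hlt.ne' ?_
  rw [← pairCost_of_lt (w := kemenyWeight p P) hba, pairCost_comm, hopt, min_eq_left hlt.le]
end

section
/- No neutral aggregation rule is PTA Condorcet consistent. Concretely: there exists an instance with two tasks a, b with p_a = 1, p_b = v (v ≥ 3 odd voters), where (v-1)/2 voters prefer a before b and (v+1)/2 voters prefer b before a, such that in both this profile P and the swapped profile P_{a↔b}, the unique PTA Condorcet consistent schedule is the one placing a first; hence any rule that returns, for P_{a↔b}, the image under the swap of its output on P must fail PTA Condorcet consistency. -/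
lemma card_filter_cast_lt (v m : ℕ) (h : m ≤ v) :
    (Finset.univ.filter (fun k : Fin v => (k:ℕ) < m)).card = m := by
  rw [Finset.card_filter,
    Fin.sum_univ_eq_sum_range (fun k => if k < m then (1:ℕ) else 0) v,
    ← Finset.card_filter]
  rw [show (Finset.range v).filter (fun i => i < m) = Finset.range m by
    ext x; simp; omega]
  exact Finset.card_range m

lemma card_filter_cast_not_lt (v m : ℕ) (h : m ≤ v) :
    (Finset.univ.filter (fun k : Fin v => ¬ (k:ℕ) < m)).card = v - m := by
  have h2 := Finset.card_filter_add_card_filter_not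
    (s := (Finset.univ : Finset (Fin v))) (p := fun k : Fin v => (k:ℕ) < m)
  rw [card_filter_cast_lt v m h] at h2
  simp only [Finset.card_univ, Fintype.card_fin] at h2
  omega

lemma perm2_eq_one (S : Equiv.Perm (Fin 2)) (h : S 0 < S 1) : S = 1 := by
  revert h; revert S; decide

/-- No neutral rule is PTA Condorcet consistent. Concretely: two tasks `a = 0` (length 1)
and `b = 1` (length `v`), `v ≥ 3` odd voters, `(v-1)/2` preferring `a` first (schedule `1`)
and `(v+1)/2` preferring `b` first (schedule `swap 0 1`).  In both this profile and the
profile with `a` and `b` swapped, the unique PTA Condorcet consistent schedule places `a`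
first; hence the swapped image of any PTA Condorcet consistent output on `P` fails PTA
Condorcet consistency on the swapped profile. -/
theorem stmt4 (v : ℕ) (hv : 3 ≤ v) (hodd : Odd v)
    (p : Fin 2 → ℝ) (hp0 : p 0 = 1) (hp1 : p 1 = v)
    (P : Fin v → Equiv.Perm (Fin 2))
    (hP : ∀ k : Fin v, P k = if (k : ℕ) < (v - 1) / 2 then 1 else Equiv.swap 0 1) :
    (∀ S, PTACondorcet p P S ↔ S = 1) ∧
    (∀ S, PTACondorcet p (fun k => (Equiv.swap (0 : Fin 2) 1).trans (P k)) S ↔ S = 1) ∧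
    (∀ S, PTACondorcet p P S →
      ¬ PTACondorcet p (fun k => (Equiv.swap (0 : Fin 2) 1).trans (P k))
        ((Equiv.swap (0 : Fin 2) 1).trans S)) := by
  obtain ⟨t, ht⟩ := hodd
  have ht1 : 1 ≤ t := by omega
  set m : ℕ := (v - 1) / 2 with hm
  have hmt : m = t := by omega
  have hmv : m ≤ v := by omega
  -- count facts
  have e1 : Finset.univ.filter (fun k : Fin v => P k 0 < P k 1)
      = Finset.univ.filter (fun k : Fin v => (k:ℕ) < m) := by
    apply Finset.filter_congr; intro k _
    rw [hP k]; split_ifs with h <;> simp [h] <;> decide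
  have e2 : Finset.univ.filter (fun k : Fin v => P k 1 < P k 0)
      = Finset.univ.filter (fun k : Fin v => ¬ (k:ℕ) < m) := by
    apply Finset.filter_congr; intro k _
    rw [hP k]; split_ifs with h <;> simp [h] <;> decide
  have c1 : (Finset.univ.filter (fun k : Fin v => P k 0 < P k 1)).card = t := by
    rw [e1, card_filter_cast_lt v m hmv, hmt]
  have c2 : (Finset.univ.filter (fun k : Fin v => P k 1 < P k 0)).card = t + 1 := by
    rw [e2, card_filter_cast_not_lt v m hmv]; omega
  -- real number facts
  set V : ℝ := (v : ℝ) with hV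
  set T : ℝ := (t : ℝ) with hT
  have hVt : V = 2 * T + 1 := by rw [hV, hT, ht]; push_cast; ring
  have hT1 : (1:ℝ) ≤ T := by rw [hT]; exact_mod_cast ht1
  have hVpos : (0:ℝ) < 1 + V := by nlinarith
  have small : 1 / (1 + V) * V ≤ 1 := by
    rw [div_mul_eq_mul_div, one_mul, div_le_one hVpos]; linarith
  have big : ¬ (V / (V + 1) * V ≤ T + 1) := by
    intro hle
    rw [div_mul_eq_mul_div, div_le_iff₀ (by linarith)] at hle
    nlinarith
  -- swapped profile values
  have hQ0 : ∀ k : Fin v, ((Equiv.swap (0 : Fin 2) 1).trans (P k)) 0 = P k 1 := by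
    intro k; simp [Equiv.trans_apply]
  have hQ1 : ∀ k : Fin v, ((Equiv.swap (0 : Fin 2) 1).trans (P k)) 1 = P k 0 := by
    intro k; simp [Equiv.trans_apply]
  have cq1 : (Finset.univ.filter (fun k : Fin v =>
      ((Equiv.swap (0 : Fin 2) 1).trans (P k)) 0 < ((Equiv.swap (0 : Fin 2) 1).trans (P k)) 1)).card
      = t + 1 := by
    rw [show (Finset.univ.filter (fun k : Fin v =>
        ((Equiv.swap (0 : Fin 2) 1).trans (P k)) 0 < ((Equiv.swap (0 : Fin 2) 1).trans (P k)) 1))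
        = Finset.univ.filter (fun k : Fin v => P k 1 < P k 0) by
      apply Finset.filter_congr; intro k _; rw [hQ0 k, hQ1 k]]
    exact c2
  have cq2 : (Finset.univ.filter (fun k : Fin v =>
      ((Equiv.swap (0 : Fin 2) 1).trans (P k)) 1 < ((Equiv.swap (0 : Fin 2) 1).trans (P k)) 0)).card
      = t := by
    rw [show (Finset.univ.filter (fun k : Fin v =>
        ((Equiv.swap (0 : Fin 2) 1).trans (P k)) 1 < ((Equiv.swap (0 : Fin 2) 1).trans (P k)) 0))
        = Finset.univ.filter (fun k : Fin v => P k 0 < P k 1) by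
      apply Finset.filter_congr; intro k _; rw [hQ0 k, hQ1 k]]
    exact c1
  have hfwd : ∀ S, PTACondorcet p P S → S = 1 := by
    intro S hS
    apply perm2_eq_one
    apply hS 0 1 (by decide)
    rw [hp0, hp1, c1]
    calc 1 / (1 + V) * V ≤ 1 := small
      _ ≤ T := hT1
  have hbwd : PTACondorcet p P 1 := by
    intro a b hab hle
    fin_cases a <;> fin_cases b
    · exact absurd rfl hab
    · decide
    · exfalso
      simp only [Fin.mk_one, Fin.mk_zero] at hle
      rw [hp0, hp1, c2] at hle
      apply big
      calc V / (V + 1) * V ≤ ((t + 1 : ℕ) : ℝ) := hle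
        _ = T + 1 := by push_cast; ring
    · exact absurd rfl hab
  have hfwd' : ∀ S, PTACondorcet p (fun k => (Equiv.swap (0 : Fin 2) 1).trans (P k)) S → S = 1 := by
    intro S hS
    apply perm2_eq_one
    apply hS 0 1 (by decide)
    rw [hp0, hp1, cq1]
    calc 1 / (1 + V) * V ≤ 1 := small
      _ ≤ ((t + 1 : ℕ) : ℝ) := by push_cast; linarith
  have hbwd' : PTACondorcet p (fun k => (Equiv.swap (0 : Fin 2) 1).trans (P k)) 1 := by
    intro a b hab hle
    fin_cases a <;> fin_cases b
    · exact absurd rfl hab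
    · decide
    · exfalso
      simp only [Fin.mk_one, Fin.mk_zero] at hle
      rw [hp0, hp1, cq2] at hle
      apply big
      calc V / (V + 1) * V ≤ T := hle
        _ ≤ T + 1 := by linarith
    · exact absurd rfl hab
  refine ⟨fun S => ⟨hfwd S, fun h => h ▸ hbwd⟩,
    fun S => ⟨hfwd' S, fun h => h ▸ hbwd'⟩, ?_⟩
  intro S hS hS'
  have h1 := hfwd S hS
  have h2 := hfwd' _ hS'
  rw [h1] at h2
  exact absurd h2 (by decide)
end

section
/- Any resolute aggregation rule that returns a schedule minimizing the sum over voters of a distance d to the voters' preferred schedules violates PTA Condorcet consistency: on a two-task instance with p_a = 1, p_b = v, v ≥ 3 odd voters, ⌊(v-1)/2⌋ preferring schedule A = (a before b) and ⌈(v+1)/2⌉ preferring B = (b before a), such a rule must return B, while A is the unique PTA Condorcet consistent schedule. -/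
lemma perm_fin_two (S : Equiv.Perm (Fin 2)) : S = 1 ∨ S = Equiv.swap 0 1 := by
  revert S; decide

/-- Any resolute rule minimizing the sum of a distance `d` to the voters' schedules violates
PTA Condorcet consistency: on the two-task instance (`p a = 1`, `p b = v`, `v ≥ 3` odd,
`⌊(v-1)/2⌋` voters preferring `A = 1` (a first) and the rest `B = swap 0 1`), every
distance-minimizing schedule is `B`, while `A` is the unique PTA Condorcet consistent
schedule. -/
theorem stmt5 (v : ℕ) (hv : 3 ≤ v) (hodd : Odd v)
    (p : Fin 2 → ℝ) (hp0 : p 0 = 1) (hp1 : p 1 = v)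
    (P : Fin v → Equiv.Perm (Fin 2))
    (hP : ∀ k : Fin v, P k = if (k : ℕ) < (v - 1) / 2 then 1 else Equiv.swap 0 1)
    (d : Equiv.Perm (Fin 2) → Equiv.Perm (Fin 2) → ℝ)
    (hnn : ∀ S S', 0 ≤ d S S')
    (hid : ∀ S S', d S S' = 0 ↔ S = S')
    (hsym : ∀ S S', d S S' = d S' S)
    (htri : ∀ S S' z, d S S' ≤ d S z + d z S') :
    (∀ S : Equiv.Perm (Fin 2),
      (∀ S', ∑ k, d S (P k) ≤ ∑ k, d S' (P k)) → S = Equiv.swap 0 1) ∧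
    (∀ S, PTACondorcet p P S ↔ S = 1) := by
  obtain ⟨t, ht⟩ := hodd
  have hm : (v - 1) / 2 = t := by omega
  have ht1 : 1 ≤ t := by omega
  have htv : t < v := by omega
  -- cardinality of the set of voters preferring identity
  have hfilt : (Finset.univ.filter (fun k : Fin v => (k : ℕ) < t)) = Finset.Iio ⟨t, htv⟩ := by
    ext k; simp [Fin.lt_def]
  have hcard : (Finset.univ.filter (fun k : Fin v => (k : ℕ) < t)).card = t := by
    rw [hfilt, Fin.card_Iio]
  have hcard' : (Finset.univ.filter (fun k : Fin v => ¬ (k : ℕ) < t)).card = t + 1 := by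
    have := Finset.card_filter_add_card_filter_not
      (s := (Finset.univ : Finset (Fin v))) (p := fun k : Fin v => (k : ℕ) < t)
    simp only [Finset.card_univ, Fintype.card_fin] at this
    omega
  have hone : (1 : Equiv.Perm (Fin 2)) ≠ Equiv.swap 0 1 := by decide
  have hc : 0 < d 1 (Equiv.swap 0 1) := by
    rcases lt_or_eq_of_le (hnn 1 (Equiv.swap 0 1)) with h | h
    · exact h
    · exact absurd ((hid _ _).mp h.symm) hone
  set c := d 1 (Equiv.swap 0 1) with hc_def
  -- sum formula
  have hsum : ∀ S : Equiv.Perm (Fin 2),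
      ∑ k, d S (P k) = t * d S 1 + (t + 1) * d S (Equiv.swap 0 1) := by
    intro S
    have hpt : ∀ k : Fin v, d S (P k) =
        if (k : ℕ) < t then d S 1 else d S (Equiv.swap 0 1) := by
      intro k; rw [hP k, hm]; split <;> rfl
    rw [Finset.sum_congr rfl (fun k _ => hpt k), Finset.sum_ite,
      Finset.sum_const, Finset.sum_const, hcard, hcard']
    push_cast; ring
  constructor
  · intro S hS
    rcases perm_fin_two S with h1 | h1
    · exfalso
      have hcomp := hS (Equiv.swap 0 1)
      rw [hsum, hsum, h1] at hcomp
      have e1 : d 1 1 = 0 := (hid 1 1).mpr rfl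
      have e2 : d (Equiv.swap 0 1) (Equiv.swap 0 1) = 0 := (hid _ _).mpr rfl
      have e3 : d (Equiv.swap 0 1) 1 = c := hsym _ _
      rw [e1, e2, e3] at hcomp
      have ht' : (1 : ℝ) ≤ t := by exact_mod_cast ht1
      nlinarith
    · exact h1
  · intro S
    constructor
    · intro hS
      have h01 : S 0 < S 1 := by
        apply hS 0 1 (by decide)
        have hcount : (Finset.univ.filter (fun k => P k 0 < P k 1)) =
            (Finset.univ.filter (fun k : Fin v => (k : ℕ) < t)) := by
          apply Finset.filter_congr
          intro k _
          rw [hP k, hm]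
          split <;> simp_all <;> decide
        rw [hcount, hcard, hp0, hp1]
        have hv' : (3 : ℝ) ≤ v := by exact_mod_cast hv
        have ht' : (1 : ℝ) ≤ t := by exact_mod_cast ht1
        rw [div_mul_eq_mul_div, div_le_iff₀ (by linarith)]
        nlinarith
      rcases perm_fin_two S with h | h
      · exact h
      · exfalso; rw [h] at h01; revert h01; decide
    · intro hS
      intro a b hab hle
      have hvr : (v : ℝ) = 2 * t + 1 := by exact_mod_cast congrArg Nat.cast ht
      fin_cases a <;> fin_cases b <;> simp only [Fin.mk_one, Fin.mk_zero, Fin.isValue] at hle hab ⊢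
      · exact absurd rfl hab
      · subst hS; decide
      · -- a = 1, b = 0 : hypothesis is false
        exfalso
        have hcount : (Finset.univ.filter (fun k => P k 1 < P k 0)) =
            (Finset.univ.filter (fun k : Fin v => ¬ (k : ℕ) < t)) := by
          apply Finset.filter_congr
          intro k _
          rw [hP k, hm]
          split <;> simp_all <;> decide
        rw [hcount, hcard', hp0, hp1] at hle
        have ht' : (1 : ℝ) ≤ t := by exact_mod_cast ht1
        rw [div_mul_eq_mul_div, div_le_iff₀ (by linarith)] at hle
        have hcast : ((t + 1 : ℕ) : ℝ) = (t : ℝ) + 1 := by push_cast; ring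
        rw [hcast] at hle
        nlinarith
      · exact absurd rfl hab
end

section
/- Let a and b be two tasks with p_a ≤ p_b such that every voter schedules a before b. Then a is scheduled before b in every schedule minimizing the weighted Kendall tau score Δ_PTA(·,P). -/
private lemma auxsum {n : ℕ} (p : Fin n → ℝ) (hp : ∀ i, 0 < p i) (S Pk : Equiv.Perm (Fin n))
    (a b : Fin n) (hab : p a ≤ p b) (hne : a ≠ b) (hPk : Pk a < Pk b) (hS : S b < S a) :
    (∑ x, ∑ y, if S (Equiv.swap a b x) < S (Equiv.swap a b y) ∧ Pk y < Pk x then p x else 0) + p b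
      ≤ ∑ x, ∑ y, if S x < S y ∧ Pk y < Pk x then p x else 0 := by
  classical
  set σ := Equiv.swap a b with hσ
  set f : Fin n → Fin n → ℝ := fun x y => if S x < S y ∧ Pk y < Pk x then p x else 0 with hf
  set g : Fin n → Fin n → ℝ := fun x y => if S (σ x) < S (σ y) ∧ Pk y < Pk x then p x else 0
    with hg
  have hσa : σ a = b := Equiv.swap_apply_left a b
  have hσb : σ b = a := Equiv.swap_apply_right a b
  have hσc : ∀ c, c ≠ a → c ≠ b → σ c = c := fun c h1 h2 => Equiv.swap_apply_of_ne_of_ne h1 h2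
  set d : Fin n → Fin n → ℝ := fun x y => f x y - g x y with hd
  have hsplit : ∀ x y, d x y =
      ((if x = a then d a y else 0) + (if x = b then d b y else 0)) +
      ((if x ≠ a ∧ x ≠ b ∧ y = a then d x a else 0) +
       (if x ≠ a ∧ x ≠ b ∧ y = b then d x b else 0)) := by
    intro x y
    by_cases hxa : x = a
    · subst hxa
      rw [if_pos rfl, if_neg hne, if_neg (by simp), if_neg (by simp)]; ring
    · by_cases hxb : x = b
      · subst hxb
        rw [if_neg hxa, if_pos rfl, if_neg (by simp), if_neg (by simp)]; ring
      · by_cases hya : y = a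
        · subst hya
          rw [if_neg hxa, if_neg hxb, if_pos ⟨hxa, hxb, rfl⟩,
            if_neg (fun h => hne h.2.2)]; ring
        · by_cases hyb : y = b
          · subst hyb
            rw [if_neg hxa, if_neg hxb, if_neg (fun h => hne h.2.2.symm),
              if_pos ⟨hxa, hxb, rfl⟩]; ring
          · rw [if_neg hxa, if_neg hxb, if_neg (fun h => hya h.2.2),
              if_neg (fun h => hyb h.2.2)]
            have : d x y = 0 := by
              simp only [hd, hf, hg, hσc x hxa hxb, hσc y hya hyb, sub_self]
            rw [this]; ring
  have e1 : ∀ x : Fin n, (∑ y, if x = a then d a y else 0)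
      = (if x = a then ∑ c, d a c else 0) := by
    intro x; split <;> simp
  have e2 : ∀ x : Fin n, (∑ y, if x = b then d b y else 0)
      = (if x = b then ∑ c, d b c else 0) := by
    intro x; split <;> simp
  have e3 : ∀ (w : Fin n) (x : Fin n), (∑ y, if x ≠ a ∧ x ≠ b ∧ y = w then d x w else 0)
      = (if x ≠ a ∧ x ≠ b then d x w else 0) := by
    intro w x
    by_cases h : x ≠ a ∧ x ≠ b
    · rw [if_pos h]
      have step : (∑ y : Fin n, if x ≠ a ∧ x ≠ b ∧ y = w then d x w else 0)
          = ∑ y : Fin n, if y = w then d x w else 0 :=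
        Finset.sum_congr rfl fun y _ => by
          by_cases hy : y = w
          · rw [if_pos ⟨h.1, h.2, hy⟩, if_pos hy]
          · rw [if_neg (fun hc => hy hc.2.2), if_neg hy]
      rw [step]
      simp
    · rw [if_neg h]
      exact Finset.sum_eq_zero fun y _ => if_neg fun hc => h ⟨hc.1, hc.2.1⟩
  have htotal : (∑ x, ∑ y, f x y) - (∑ x, ∑ y, g x y) =
      (∑ c, d a c) + (∑ c, d b c) +
        ((∑ c, if c ≠ a ∧ c ≠ b then d c a else 0) +
         (∑ c, if c ≠ a ∧ c ≠ b then d c b else 0)) := by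
    rw [← Finset.sum_sub_distrib]
    simp only [← Finset.sum_sub_distrib]
    rw [Finset.sum_congr rfl fun x _ => Finset.sum_congr rfl fun y _ => hsplit x y]
    rw [Finset.sum_congr rfl fun x _ => by
      rw [Finset.sum_add_distrib, Finset.sum_add_distrib, Finset.sum_add_distrib,
        e1 x, e2 x, e3 a x, e3 b x]]
    rw [Finset.sum_add_distrib, Finset.sum_add_distrib, Finset.sum_add_distrib]
    have A1 : (∑ x : Fin n, if x = a then (∑ c, d a c) else 0) = ∑ c, d a c := by simp
    have A2 : (∑ x : Fin n, if x = b then (∑ c, d b c) else 0) = ∑ c, d b c := by simp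
    rw [A1, A2]
  have hdba : d b a = p b := by
    simp only [hd, hf, hg, hσa, hσb]
    rw [if_pos ⟨hS, hPk⟩, if_neg (by rintro ⟨h, -⟩; exact absurd h (asymm hS))]
    ring
  have hkey : p b ≤ (∑ x, ∑ y, f x y) - (∑ x, ∑ y, g x y) := by
    rw [htotal, ← Finset.sum_add_distrib, ← Finset.sum_add_distrib, ← Finset.sum_add_distrib]
    have hpb' : p b = ∑ c : Fin n, (if c = a then p b else 0) := by simp
    rw [hpb']
    refine Finset.sum_le_sum fun c _ => ?_
    by_cases hca : c = a
    · subst hca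
      have h1 : d c c = 0 := by simp [hd, hf, hg]
      rw [if_pos rfl, h1, hdba, if_neg (by simp), if_neg (by simp)]
      simp
    · rw [if_neg hca]
      by_cases hcb : c = b
      · subst hcb
        have h1 : d c c = 0 := by simp [hd, hf, hg]
        have h2 : d a c = 0 := by
          simp only [hd, hf, hg, hσa, hσb]
          rw [if_neg (by rintro ⟨h, -⟩; exact absurd h (asymm hS)),
            if_neg (by rintro ⟨-, h⟩; exact absurd h (asymm hPk))]
          ring
        rw [h1, h2, if_neg (by simp), if_neg (by simp)]
        simp
      · rw [if_pos ⟨hca, hcb⟩, if_pos ⟨hca, hcb⟩]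
        simp only [hd, hf, hg, hσa, hσb, hσc c hca hcb]
        have hpc := hp c
        have hpa := hp a
        have hpb := hp b
        have hsac : S a ≠ S c := fun h => hca (S.injective h).symm
        have hsbc : S b ≠ S c := fun h => hcb (S.injective h).symm
        have hpac : Pk a ≠ Pk c := fun h => hca (Pk.injective h).symm
        have hpbc : Pk b ≠ Pk c := fun h => hcb (Pk.injective h).symm
        set_option maxHeartbeats 2000000 in
        split_ifs <;> first | (exfalso; omega) | linarith
  linarith

/-- If `p a ≤ p b` and every voter schedules `a` before `b`, then `a` is before `b` in every
schedule minimizing the weighted Kendall tau score. -/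
theorem stmt8 {n v : ℕ} (hv : 0 < v) (p : Fin n → ℝ) (hp : ∀ i, 0 < p i)
    (P : Fin v → Equiv.Perm (Fin n)) (a b : Fin n) (hab : p a ≤ p b)
    (hP : ∀ k, P k a < P k b)
    (S : Equiv.Perm (Fin n)) (hmin : ∀ S', deltaPTA p P S ≤ deltaPTA p P S') :
    S a < S b := by
  classical
  by_contra hcon
  have hne : a ≠ b := by
    intro h; subst h; exact lt_irrefl _ (hP ⟨0, hv⟩)
  have hS : S b < S a :=
    lt_of_le_of_ne (not_lt.mp hcon) fun h => hne (S.injective h).symm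
  set S' := (Equiv.swap a b).trans S with hS'
  have h1 : deltaPTA p P S' + (v : ℝ) * p b ≤ deltaPTA p P S := by
    unfold deltaPTA
    have hk : ∀ k : Fin v,
        (∑ x, ∑ y, if S' x < S' y ∧ P k y < P k x then p x else 0) + p b
          ≤ ∑ x, ∑ y, if S x < S y ∧ P k y < P k x then p x else 0 := by
      intro k
      simpa [hS', Equiv.trans_apply] using
        auxsum p hp S (P k) a b hab hne (hP k) hS
    calc (∑ k, ∑ x, ∑ y, if S' x < S' y ∧ P k y < P k x then p x else 0) + (v : ℝ) * p b
        = ∑ k : Fin v, ((∑ x, ∑ y, if S' x < S' y ∧ P k y < P k x then p x else 0) + p b) := by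
          rw [Finset.sum_add_distrib]
          simp [Finset.card_univ, mul_comm]
      _ ≤ ∑ k, ∑ x, ∑ y, if S x < S y ∧ P k y < P k x then p x else 0 :=
          Finset.sum_le_sum fun k _ => hk k
  have h2 := hmin S'
  have h3 : 0 < (v : ℝ) * p b := by
    have : (0 : ℝ) < v := by exact_mod_cast hv
    exact mul_pos this (hp b)
  linarith
end

section
/- Let a and b be two tasks with p_a ≤ p_b such that every voter schedules a before b. If S is a schedule minimizing total tardiness T(·,P) with b before a, then the schedule S' obtained from S by swapping a and b satisfies T(S',P) ≤ T(S,P); hence there exists an optimal schedule for total tardiness in which a is before b. -/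
/-- Completion time of task `i` in schedule `S`. -/
noncomputable def Ctime {n : ℕ} (p : Fin n → ℝ) (S : Equiv.Perm (Fin n)) (i : Fin n) : ℝ :=
  ∑ j ∈ Finset.univ.filter (fun j => S j ≤ S i), p j

/-- Total tardiness of schedule `S` w.r.t. profile `P`. -/
noncomputable def Tard {n v : ℕ} (p : Fin n → ℝ) (P : Fin v → Equiv.Perm (Fin n))
    (S : Equiv.Perm (Fin n)) : ℝ :=
  ∑ k, ∑ i, max 0 (Ctime p S i - Ctime p (P k) i)

lemma sum_swap_le {ι : Type*} [Fintype ι] [DecidableEq ι] (f g : ι → ℝ) (a b : ι) (hne : a ≠ b)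
    (h1 : ∀ j, j ≠ a → j ≠ b → g j ≤ f j) (h2 : g a + g b ≤ f a + f b) :
    ∑ j, g j ≤ ∑ j, f j := by
  have hb : b ∈ (Finset.univ : Finset ι) := Finset.mem_univ b
  have ha : a ∈ (Finset.univ : Finset ι).erase b := Finset.mem_erase.2 ⟨hne, Finset.mem_univ a⟩
  rw [← Finset.sum_erase_add _ g hb, ← Finset.sum_erase_add _ g ha,
      ← Finset.sum_erase_add _ f hb, ← Finset.sum_erase_add _ f ha]
  have h3 : ∑ j ∈ ((Finset.univ : Finset ι).erase b).erase a, g j ≤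
      ∑ j ∈ ((Finset.univ : Finset ι).erase b).erase a, f j := by
    apply Finset.sum_le_sum
    intro j hj
    exact h1 j (Finset.mem_erase.1 hj).1 (Finset.mem_erase.1 (Finset.mem_erase.1 hj).2).1
  linarith

lemma Ctime_mono {n : ℕ} (p : Fin n → ℝ) (hp : ∀ i, 0 ≤ p i) (S : Equiv.Perm (Fin n))
    {i j : Fin n} (h : S i ≤ S j) : Ctime p S i ≤ Ctime p S j := by
  apply Finset.sum_le_sum_of_subset_of_nonneg
  · intro x hx
    simp only [Finset.mem_filter, Finset.mem_univ, true_and] at *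
    exact le_trans hx h
  · intros
    exact hp _

lemma key_ineq (A B da db : ℝ) (hBA : B ≤ A) (hd : da ≤ db) :
    max 0 (B - da) + max 0 (A - db) ≤ max 0 (A - da) + max 0 (B - db) := by
  simp only [max_def]
  split_ifs <;> linarith

lemma Ctime_swap_other {n : ℕ} (p : Fin n → ℝ) (hp : ∀ i, 0 < p i) (S : Equiv.Perm (Fin n))
    (a b i : Fin n) (hab : p a ≤ p b) (hba : S b < S a) (hia : i ≠ a) (hib : i ≠ b) :
    Ctime p ((Equiv.swap a b).trans S) i ≤ Ctime p S i := by
  have hne : a ≠ b := by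
    intro h; rw [h] at hba; exact lt_irrefl _ hba
  unfold Ctime
  rw [Finset.sum_filter, Finset.sum_filter]
  apply sum_swap_le _ _ a b hne
  · intro j hja hjb
    rw [Equiv.trans_apply, Equiv.trans_apply, Equiv.swap_apply_of_ne_of_ne hja hjb,
      Equiv.swap_apply_of_ne_of_ne hia hib]
  · simp only [Equiv.trans_apply, Equiv.swap_apply_left, Equiv.swap_apply_right,
      Equiv.swap_apply_of_ne_of_ne hia hib]
    have himp : S a ≤ S i → S b ≤ S i := fun h => le_trans hba.le h
    split_ifs with h1 h2 h3 <;> try linarith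
    all_goals first
      | linarith
      | (exfalso; first | exact ‹¬ S b ≤ S i› (himp ‹S a ≤ S i›)
                        | exact ‹¬ S a ≤ S a› le_rfl | exact ‹¬ S b ≤ S b› le_rfl)

lemma Ctime_swap_b {n : ℕ} (p : Fin n → ℝ) (S : Equiv.Perm (Fin n))
    (a b : Fin n) (hba : S b < S a) :
    Ctime p ((Equiv.swap a b).trans S) b = Ctime p S a := by
  unfold Ctime
  congr 1
  ext j
  simp only [Finset.mem_filter, Finset.mem_univ, true_and, Equiv.trans_apply,
    Equiv.swap_apply_right]
  by_cases hja : j = a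
  · subst hja; simp [hba.le]
  · by_cases hjb : j = b
    · subst hjb; simp [hba.le]
    · rw [Equiv.swap_apply_of_ne_of_ne hja hjb]

lemma Ctime_swap_a {n : ℕ} (p : Fin n → ℝ) (S : Equiv.Perm (Fin n))
    (a b : Fin n) (hab : p a ≤ p b) (hba : S b < S a) :
    Ctime p ((Equiv.swap a b).trans S) a ≤ Ctime p S b := by
  have hne : a ≠ b := by
    intro h; rw [h] at hba; exact lt_irrefl _ hba
  unfold Ctime
  rw [Finset.sum_filter, Finset.sum_filter]
  apply sum_swap_le _ _ a b hne
  · intro j hja hjb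
    rw [Equiv.trans_apply, Equiv.trans_apply, Equiv.swap_apply_of_ne_of_ne hja hjb,
      Equiv.swap_apply_left]
  · simp only [Equiv.trans_apply, Equiv.swap_apply_left, Equiv.swap_apply_right]
    have hnab : ¬ S a ≤ S b := not_le.2 hba
    simp [hnab]
    linarith

/-- If `p a ≤ p b`, all voters schedule `a` before `b`, and `S` is a total-tardiness
minimizer with `b` before `a`, then swapping `a` and `b` does not increase the total
tardiness; hence some optimal schedule places `a` before `b`. -/
theorem stmt9 {n v : ℕ} (p : Fin n → ℝ) (hp : ∀ i, 0 < p i)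
    (P : Fin v → Equiv.Perm (Fin n)) (a b : Fin n) (hab : p a ≤ p b)
    (hP : ∀ k, P k a < P k b)
    (S : Equiv.Perm (Fin n)) (hmin : ∀ S', Tard p P S ≤ Tard p P S')
    (hba : S b < S a) :
    Tard p P ((Equiv.swap a b).trans S) ≤ Tard p P S ∧
    ∃ S' : Equiv.Perm (Fin n), (∀ S'', Tard p P S' ≤ Tard p P S'') ∧ S' a < S' b := by
  have hne : a ≠ b := by
    intro h; rw [h] at hba; exact lt_irrefl _ hba
  have hple : ∀ i, (0 : ℝ) ≤ p i := fun i => (hp i).le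
  set S' := (Equiv.swap a b).trans S with hS'
  have h1 : Tard p P S' ≤ Tard p P S := by
    unfold Tard
    apply Finset.sum_le_sum
    intro k _
    apply sum_swap_le _ _ a b hne
    · intro j hja hjb
      have h := Ctime_swap_other p hp S a b j hab hba hja hjb
      exact max_le_max le_rfl (by linarith)
    · have hCb : Ctime p S' b = Ctime p S a := Ctime_swap_b p S a b hba
      have hCa : Ctime p S' a ≤ Ctime p S b := Ctime_swap_a p S a b hab hba
      have hBA : Ctime p S b ≤ Ctime p S a := Ctime_mono p hple S hba.le
      have hd : Ctime p (P k) a ≤ Ctime p (P k) b := Ctime_mono p hple (P k) (hP k).le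
      have hkey := key_ineq (Ctime p S a) (Ctime p S b) (Ctime p (P k) a) (Ctime p (P k) b)
        hBA hd
      have h3 : max 0 (Ctime p S' a - Ctime p (P k) a) ≤
          max 0 (Ctime p S b - Ctime p (P k) a) := max_le_max le_rfl (by linarith)
      rw [hCb]
      linarith
  refine ⟨h1, S', fun S'' => le_trans h1 (hmin S''), ?_⟩
  have ha : S' a = S b := by simp [hS']
  have hb : S' b = S a := by simp [hS']
  rw [ha, hb]
  exact hba
end

section
/- Let a and b be two tasks with equal processing times p_a = p_b such that every voter schedules a before b. If S is a schedule minimizing the total absolute deviation D(·,P) with b before a, then the schedule S' obtained by swapping a and b satisfies D(S',P) ≤ D(S,P); hence some optimal schedule for total absolute deviation places a before b. -/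
/-- Total absolute deviation of schedule `S` w.r.t. profile `P`. -/
noncomputable def DevP {n v : ℕ} (p : Fin n → ℝ) (P : Fin v → Equiv.Perm (Fin n))
    (S : Equiv.Perm (Fin n)) : ℝ :=
  ∑ k, ∑ i, |Ctime p S i - Ctime p (P k) i|

/-- If `p a = p b`, all voters schedule `a` before `b`, and `S` is a total-absolute-deviation
minimizer with `b` before `a`, then swapping `a` and `b` does not increase the total
deviation; hence some optimal schedule places `a` before `b`. -/
theorem stmt10 {n v : ℕ} (p : Fin n → ℝ) (hp : ∀ i, 0 < p i)
    (P : Fin v → Equiv.Perm (Fin n)) (a b : Fin n) (hab : p a = p b)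
    (hP : ∀ k, P k a < P k b)
    (S : Equiv.Perm (Fin n)) (hmin : ∀ S', DevP p P S ≤ DevP p P S')
    (hba : S b < S a) :
    DevP p P ((Equiv.swap a b).trans S) ≤ DevP p P S ∧
    ∃ S' : Equiv.Perm (Fin n), (∀ S'', DevP p P S' ≤ DevP p P S'') ∧ S' a < S' b := by
  classical
  have hne : a ≠ b := by
    rintro rfl; exact lt_irrefl _ hba
  set T : Equiv.Perm (Fin n) := (Equiv.swap a b).trans S with hTdef
  have hps : ∀ j, p (Equiv.swap a b j) = p j := by
    intro j
    rcases eq_or_ne j a with rfl | hja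
    · simp [Equiv.swap_apply_left, hab]
    rcases eq_or_ne j b with rfl | hjb
    · simp [Equiv.swap_apply_right, hab]
    · rw [Equiv.swap_apply_of_ne_of_ne hja hjb]
  have key : ∀ i, Ctime p T i = Ctime p S (Equiv.swap a b i) := by
    intro i
    unfold Ctime
    refine Finset.sum_equiv (Equiv.swap a b) ?_ ?_
    · intro j
      simp [hTdef]
    · intro j _
      exact (hps j).symm
  have mono : ∀ (S' : Equiv.Perm (Fin n)) (i j : Fin n), S' i ≤ S' j →
      Ctime p S' i ≤ Ctime p S' j := by
    intro S' i j hij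
    unfold Ctime
    apply Finset.sum_le_sum_of_subset_of_nonneg
    · intro x hx
      simp only [Finset.mem_filter, Finset.mem_univ, true_and] at hx ⊢
      exact hx.trans hij
    · intro x _ _
      exact (hp x).le
  have pair : ∀ x y u w : ℝ, x ≤ y → u ≤ w →
      |x - u| + |y - w| ≤ |y - u| + |x - w| := by
    intro x y u w hxy huw
    rcases abs_cases (x - u) with ⟨e1, h1⟩ | ⟨e1, h1⟩ <;>
    rcases abs_cases (y - w) with ⟨e2, h2⟩ | ⟨e2, h2⟩ <;>
    rcases abs_cases (y - u) with ⟨e3, h3⟩ | ⟨e3, h3⟩ <;>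
    rcases abs_cases (x - w) with ⟨e4, h4⟩ | ⟨e4, h4⟩ <;>
    rw [e1, e2, e3, e4] <;> linarith
  have hle : DevP p P T ≤ DevP p P S := by
    unfold DevP
    apply Finset.sum_le_sum
    intro k _
    have hsub : ({a, b} : Finset (Fin n)) ⊆ Finset.univ := Finset.subset_univ _
    have split : ∀ g : Fin n → ℝ,
        ∑ i, g i = (∑ i ∈ Finset.univ \ {a, b}, g i) + (g a + g b) := by
      intro g
      rw [← Finset.sum_sdiff hsub, Finset.sum_pair hne]
    rw [split, split]
    have hcongr : ∑ i ∈ Finset.univ \ {a, b}, |Ctime p T i - Ctime p (P k) i|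
        = ∑ i ∈ Finset.univ \ {a, b}, |Ctime p S i - Ctime p (P k) i| := by
      refine Finset.sum_congr rfl ?_
      intro i hi
      simp only [Finset.mem_sdiff, Finset.mem_insert, Finset.mem_singleton] at hi
      push_neg at hi
      rw [key, Equiv.swap_apply_of_ne_of_ne hi.2.1 hi.2.2]
    rw [hcongr]
    have ea : Ctime p T a = Ctime p S b := by rw [key, Equiv.swap_apply_left]
    have eb : Ctime p T b = Ctime p S a := by rw [key, Equiv.swap_apply_right]
    rw [ea, eb]
    have := pair (Ctime p S b) (Ctime p S a) (Ctime p (P k) a) (Ctime p (P k) b)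
      (mono S b a hba.le) (mono (P k) a b (hP k).le)
    linarith
  refine ⟨hle, T, fun S'' => hle.trans (hmin S''), ?_⟩
  have ha : T a = S b := by simp [hTdef]
  have hb : T b = S a := by simp [hTdef]
  rw [ha, hb]; exact hba
end

section
/- The LMT heuristic is not α-approximate for any α ≥ 1: there is a family of instances (parameterized by p, n, v) in which the schedule produced by ordering tasks by nondecreasing median completion time has total absolute deviation v·p·n + v·n − 3v − 4p, while another schedule achieves total deviation 2pv + vn − 3v + 2p + 2n − 6, and the ratio of these quantities tends to infinity as p, n, v → ∞. -/
/-- Absolute deviation between two schedules. -/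
noncomputable def Dev {n : ℕ} (p : Fin n → ℝ) (S S' : Equiv.Perm (Fin n)) : ℝ :=
  ∑ i, |Ctime p S i - Ctime p S' i|

/-- Lower median of the values of `f` over the `v` voters (the `((v-1)/2)`-th element of the
sorted list of values). -/
noncomputable def med (v : ℕ) (f : Fin v → ℝ) : ℝ :=
  ((Finset.univ.val.map f).sort (· ≤ ·)).getD ((v - 1) / 2) 0

/-!
When every task has length `1` except `t₁, t₂, t₃` of length `p`, the task in position `q` of a
schedule completes at `q + 1 + (p - 1) · #{long tasks in positions ≤ q}`. Every voter puts the
long tasks in positions `0, 1, n - 1` and each `tⱼ`, `j ≥ 4`, one position earlier than the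
identity schedule does, so all completion times are explicit: the medians are `p, p, 2p` and
`2p + j - 3` for `tⱼ`, hence nondecreasing, and each total deviation is a sum over four blocks of
identical voters. With `v = 4` and `p = n - 4 = 4⌈α⌉ + 1` the ratio of the two deviations
exceeds `α`.
-/

open Finset

theorem List.Pairwise.getD_eq_of_forall_le {α : Type*} [LinearOrder α] {l : List α}
    (hl : l.Pairwise (· ≤ ·)) {n : ℕ} (d c : α) (hn : n < l.length) (hle : ∀ x ∈ l, c ≤ x)
    (hgt : l.countP (c < ·) < l.length - n) : l.getD n d = c := by
  rw [List.getD_eq_getElem _ _ hn]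
  refine le_antisymm (not_lt.1 fun hc => hgt.not_ge ?_) (hle _ (List.getElem_mem hn))
  have hdrop : ∀ x ∈ l.drop n, c < x := by
    have := hl.drop (i := n)
    rw [List.drop_eq_getElem_cons hn, List.pairwise_cons] at this
    rw [List.drop_eq_getElem_cons hn]
    rintro x (_ | ⟨_, hx⟩)
    exacts [hc, hc.trans_le (this.1 x hx)]
  calc l.length - n = (l.drop n).countP (c < ·) := by
        rw [List.countP_eq_length.2 (by simpa using hdrop), List.length_drop]
    _ ≤ l.countP (c < ·) := (List.drop_sublist n l).countP_le

theorem med_eq_of_forall_le {v : ℕ} (hv : 0 < v) (f : Fin v → ℝ) (c : ℝ) (hle : ∀ k, c ≤ f k)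
    (hgt : #{k | c < f k} ≤ v / 2) : med v f = c := by
  have hcount : ((univ.val.map f).sort (· ≤ ·)).countP (c < ·) = #{k | c < f k} := by
    rw [← Multiset.coe_countP, Multiset.sort_eq, Multiset.countP_map]
    rfl
  have hlen : ((univ.val.map f).sort (· ≤ ·)).length = v := by simp
  apply List.Pairwise.getD_eq_of_forall_le (Multiset.pairwise_sort _ _) _ _ (by omega)
  · intro x hx
    rw [← Multiset.mem_coe, Multiset.sort_eq] at hx
    obtain ⟨k, -, rfl⟩ := Multiset.mem_map.1 hx
    exact hle k
  · omega

theorem med_comp_eq_of_monotone {v : ℕ} (hv : 0 < v) {g : ℕ → ℝ} (hg : Monotone g)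
    (q : Fin v → ℕ) (q₀ : ℕ) (hle : ∀ k, q₀ ≤ q k) (hgt : #{k | q₀ < q k} ≤ v / 2) :
    med v (fun k => g (q k)) = g q₀ :=
  med_eq_of_forall_le hv _ _ (fun k => hg (hle k))
    ((card_le_card (monotone_filter_right _ fun _ _ => hg.reflect_lt)).trans hgt)

theorem Fin.sum_four_blocks {v : ℕ} (hv : 2 ≤ v) (g : Fin v → ℝ) (A B C D : ℝ)
    (hA : ∀ k : Fin v, (k : ℕ) < v / 2 - 1 → g k = A)
    (hB : ∀ k : Fin v, (k : ℕ) = v / 2 - 1 → g k = B)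
    (hC : ∀ k : Fin v, (k : ℕ) = v / 2 → g k = C) (hD : ∀ k : Fin v, v / 2 < (k : ℕ) → g k = D) :
    ∑ k, g k = (v / 2 - 1 : ℕ) * A + B + C + (v - v / 2 - 1 : ℕ) * D := by
  set b : ℕ → ℝ := fun k =>
    if k < v / 2 - 1 then A else if k = v / 2 - 1 then B else if k = v / 2 then C else D with hb
  have hgb : ∀ k, g k = b k := by
    intro k
    simp only [hb]
    split_ifs with h1 h2 h3
    exacts [hA k h1, hB k h2, hC k h3, hD k (by omega)]
  rw [sum_congr rfl fun k _ => hgb k, Fin.sum_univ_eq_sum_range b v,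
    show range v = range (v / 2 - 1 + 1 + 1 + (v - v / 2 - 1)) from congrArg _ (by omega),
    sum_range_add, sum_range_succ, sum_range_succ,
    sum_congr rfl fun k hk => if_pos (mem_range.1 hk),
    sum_congr rfl fun k _ => show b (v / 2 - 1 + 1 + 1 + k) = D by
      simp only [hb]; split_ifs <;> first | rfl | omega]
  simp only [hb, Finset.sum_const, Finset.card_range, nsmul_eq_mul]
  split_ifs <;> first | omega | ring

theorem Fin.sum_eq_three_add_const {M : Type*} [AddCommMonoid M] {m : ℕ} (g : Fin (m + 4) → M)
    (c : M) (h : ∀ j : Fin (m + 4), 3 ≤ (j : ℕ) → g j = c) :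
    ∑ j, g j = g 0 + g 1 + g 2 + (m + 1) • c := by
  rw [Fin.sum_univ_succ, Fin.sum_univ_succ, Fin.sum_univ_succ,
    sum_congr rfl fun j _ => h _ (by simp)]
  simp [add_assoc]

def taskLength (m pr : ℕ) (j : Fin (m + 4)) : ℝ := if (j : ℕ) < 3 then pr else 1

/-- Completion time of the job in position `q` when the jobs in the positions listed in `L` have
length `a` and all other jobs have length `1`. -/
def finishTime (L : List ℕ) (a : ℝ) (q : ℕ) : ℝ := q + 1 + (a - 1) * L.countP (· ≤ q)

theorem finishTime_mono (L : List ℕ) {a : ℝ} (ha : 1 ≤ a) : Monotone (finishTime L a) := by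
  intro q q' h
  have hcount : L.countP (· ≤ q) ≤ L.countP (· ≤ q') :=
    List.countP_mono_left fun x _ hx => by simp only [decide_eq_true_eq] at *; omega
  unfold finishTime
  gcongr

theorem finishTime_slots_zero (m : ℕ) (a : ℝ) : finishTime [0, 1, m + 3] a 0 = a := by
  simp [finishTime]

theorem finishTime_slots_one (m : ℕ) (a : ℝ) : finishTime [0, 1, m + 3] a 1 = 2 * a := by
  simp [finishTime]; ring

theorem finishTime_slots_last (m : ℕ) (a : ℝ) :
    finishTime [0, 1, m + 3] a (m + 3) = 3 * a + m + 1 := by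
  simp [finishTime]; ring

theorem ctime_taskLength {m pr : ℕ} (S : Equiv.Perm (Fin (m + 4))) (i : Fin (m + 4)) :
    Ctime (taskLength m pr) S i = finishTime [(S 0 : ℕ), S 1, S 2] pr (S i) := by
  have hsplit : ∀ j, taskLength m pr j = 1 + if (j : ℕ) < 3 then (pr - 1 : ℝ) else 0 := by
    intro j; unfold taskLength; split_ifs <;> ring
  have hcount : (#{j | S j ≤ S i} : ℝ) = (S i : ℕ) + 1 := by
    rw [← card_map S.toEmbedding, map_filter]
    simp [filter_ge_eq_Iic]
  unfold Ctime finishTime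
  rw [sum_filter]
  simp_rw [hsplit, ite_add_zero]
  rw [sum_add_distrib, sum_boole, hcount,
    Fin.sum_eq_three_add_const _ 0 fun j hj => by simp [Nat.not_lt.2 hj]]
  simp only [List.countP_cons, List.countP_nil, decide_eq_true_eq, ← Fin.le_def, Fin.val_zero,
    Fin.val_one, Fin.val_two, Nat.ofNat_pos, Nat.one_lt_ofNat, Nat.lt_add_one, if_true, smul_zero,
    add_zero]
  split_ifs <;> push_cast <;> ring

theorem ctime_one_taskLength {m pr : ℕ} (i : Fin (m + 4)) :
    Ctime (taskLength m pr) 1 i = finishTime [0, 1, 2] pr i := by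
  simp [ctime_taskLength, Nat.mod_eq_of_lt (show 2 < m + 4 by omega)]

theorem dev_eq_of_tail {m : ℕ} (p : Fin (m + 4) → ℝ) (T S : Equiv.Perm (Fin (m + 4))) (c : ℝ)
    (h : ∀ j : Fin (m + 4), 3 ≤ (j : ℕ) → |Ctime p T j - Ctime p S j| = c) :
    Dev p T S = |Ctime p T 0 - Ctime p S 0| + |Ctime p T 1 - Ctime p S 1| +
      |Ctime p T 2 - Ctime p S 2| + (m + 1) * c := by
  rw [Dev, Fin.sum_eq_three_add_const _ c h, nsmul_eq_mul]
  push_cast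
  ring

def IsVoterOrder {m : ℕ} (S : Equiv.Perm (Fin (m + 4))) (a b c : ℕ) : Prop :=
  (S 0 : ℕ) = a ∧ (S 1 : ℕ) = b ∧ (S 2 : ℕ) = c ∧
    ∀ j : Fin (m + 4), 3 ≤ (j : ℕ) → (S j : ℕ) = (j : ℕ) - 1

namespace IsVoterOrder

variable {m pr a b c a' b' c' : ℕ} {S T : Equiv.Perm (Fin (m + 4))}

theorem ctime (hS : IsVoterOrder S a b c) (hL : [a, b, c].Perm [0, 1, m + 3]) (i : Fin (m + 4)) :
    Ctime (taskLength m pr) S i = finishTime [0, 1, m + 3] pr (S i) := by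
  rw [ctime_taskLength, hS.1, hS.2.1, hS.2.2.1, finishTime, finishTime, hL.countP_eq]

theorem dev_one (hS : IsVoterOrder S a b c) (hL : [a, b, c].Perm [0, 1, m + 3]) :
    Dev (taskLength m pr) 1 S =
      |pr - finishTime [0, 1, m + 3] pr a| + |2 * pr - finishTime [0, 1, m + 3] pr b| +
        |3 * pr - finishTime [0, 1, m + 3] pr c| + (m + 1) * pr := by
  rw [dev_eq_of_tail _ _ _ pr fun j hj => ?_]
  · simp only [ctime_one_taskLength, Fin.val_zero, Fin.val_one, Fin.val_two, hS.ctime hL, hS.1,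
      hS.2.1, hS.2.2.1]
    rw [show finishTime [0, 1, 2] (pr : ℝ) 0 = pr by norm_num [finishTime],
      show finishTime [0, 1, 2] (pr : ℝ) 1 = 2 * pr by norm_num [finishTime]; ring,
      show finishTime [0, 1, 2] (pr : ℝ) 2 = 3 * pr by norm_num [finishTime]; ring]
  · have hj' := j.isLt
    rw [ctime_one_taskLength, hS.ctime hL, hS.2.2.2 j hj]
    simp [finishTime, show 2 ≤ (j : ℕ) by omega, show 1 ≤ (j : ℕ) - 1 by omega,
      show ¬ m + 3 ≤ (j : ℕ) - 1 by omega, show 1 ≤ (j : ℕ) by omega]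
    ring_nf
    exact abs_of_nonneg (by positivity)

theorem dev (hT : IsVoterOrder T a b c) (hTL : [a, b, c].Perm [0, 1, m + 3])
    (hS : IsVoterOrder S a' b' c') (hSL : [a', b', c'].Perm [0, 1, m + 3]) :
    Dev (taskLength m pr) T S =
      |finishTime [0, 1, m + 3] pr a - finishTime [0, 1, m + 3] pr a'| +
        |finishTime [0, 1, m + 3] pr b - finishTime [0, 1, m + 3] pr b'| +
        |finishTime [0, 1, m + 3] pr c - finishTime [0, 1, m + 3] pr c'| := by
  rw [dev_eq_of_tail _ _ _ 0 fun j hj => by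
    rw [hT.ctime hTL, hS.ctime hSL, hT.2.2.2 j hj, hS.2.2.2 j hj, sub_self, abs_zero]]
  simp only [hT.ctime hTL, hS.ctime hSL, hT.1, hT.2.1, hT.2.2.1, hS.1, hS.2.1, hS.2.2.1]
  ring

end IsVoterOrder

def IsProfile (m v : ℕ) (P : Fin v → Equiv.Perm (Fin (m + 4))) : Prop :=
  (∀ k : Fin v, (k : ℕ) < v / 2 - 1 → IsVoterOrder (P k) 0 (m + 3) 1) ∧
  (∀ k : Fin v, (k : ℕ) = v / 2 - 1 → IsVoterOrder (P k) 0 1 (m + 3)) ∧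
  (∀ k : Fin v, (k : ℕ) = v / 2 → IsVoterOrder (P k) 1 0 (m + 3)) ∧
  (∀ k : Fin v, v / 2 < (k : ℕ) → IsVoterOrder (P k) (m + 3) 0 1)

theorem slots_perm_type₁ (m : ℕ) : [0, m + 3, 1].Perm [0, 1, m + 3] := .cons 0 (.swap 1 (m + 3) [])
theorem slots_perm_type₃ (m : ℕ) : [1, 0, m + 3].Perm [0, 1, m + 3] := .swap 0 1 [m + 3]
theorem slots_perm_type₄ (m : ℕ) : [m + 3, 0, 1].Perm [0, 1, m + 3] :=
  (List.perm_middle (l₁ := [0, 1]) (l₂ := [])).symm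

namespace IsProfile

variable {m v pr : ℕ} {P : Fin v → Equiv.Perm (Fin (m + 4))}

theorem exists_isVoterOrder (hP : IsProfile m v P) (k : Fin v) :
    ∃ a b c, IsVoterOrder (P k) a b c ∧ [a, b, c].Perm [0, 1, m + 3] := by
  obtain ⟨h₁, h₂, h₃, h₄⟩ := hP
  rcases lt_trichotomy (k : ℕ) (v / 2) with hk | hk | hk
  · rcases Nat.lt_or_eq_of_le (Nat.le_sub_one_of_lt hk) with hk | hk
    exacts [⟨_, _, _, h₁ k hk, slots_perm_type₁ m⟩, ⟨_, _, _, h₂ k hk, .refl _⟩]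
  exacts [⟨_, _, _, h₃ k hk, slots_perm_type₃ m⟩, ⟨_, _, _, h₄ k hk, slots_perm_type₄ m⟩]

theorem ctime (hP : IsProfile m v P) (k : Fin v) (i : Fin (m + 4)) :
    Ctime (taskLength m pr) (P k) i = finishTime [0, 1, m + 3] pr (P k i) := by
  obtain ⟨a, b, c, hS, hL⟩ := hP.exists_isVoterOrder k
  exact hS.ctime hL i

theorem tail (hP : IsProfile m v P) (k : Fin v) (j : Fin (m + 4)) (hj : 3 ≤ (j : ℕ)) :
    (P k j : ℕ) = j - 1 := by
  obtain ⟨a, b, c, hS, -⟩ := hP.exists_isVoterOrder k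
  exact hS.2.2.2 j hj

theorem positions (hP : IsProfile m v P) (k : Fin v) :
    ((k : ℕ) < v / 2 → (P k 0 : ℕ) = 0) ∧ (v / 2 ≤ (k : ℕ) → (P k 1 : ℕ) = 0) ∧
    ((k : ℕ) ≠ v / 2 - 1 → (k : ℕ) ≠ v / 2 → (P k 2 : ℕ) = 1) ∧ 1 ≤ (P k 2 : ℕ) := by
  obtain ⟨h₁, h₂, h₃, h₄⟩ := hP
  rcases lt_trichotomy (k : ℕ) (v / 2) with hk | hk | hk
  · rcases Nat.lt_or_eq_of_le (Nat.le_sub_one_of_lt hk) with hk' | hk'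
    · obtain ⟨e₀, e₁, e₂, -⟩ := h₁ k hk'
      omega
    · obtain ⟨e₀, e₁, e₂, -⟩ := h₂ k hk'
      omega
  · obtain ⟨e₀, e₁, e₂, -⟩ := h₃ k hk
    omega
  · obtain ⟨e₀, e₁, e₂, -⟩ := h₄ k hk
    omega

theorem sub_one_le (hP : IsProfile m v P) (k : Fin v) (i : Fin (m + 4)) :
    (i : ℕ) - 1 ≤ P k i := by
  have := (hP.positions k).2.2.2
  rcases (by omega : (i : ℕ) ≤ 1 ∨ (i : ℕ) = 2 ∨ 3 ≤ (i : ℕ)) with hi | hi | hi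
  · omega
  · obtain rfl : i = 2 := Fin.ext (by rw [hi, Fin.val_two])
    simp only [Fin.val_two]
    omega
  · rw [hP.tail k i hi]

theorem card_sub_one_lt_le (hP : IsProfile m v P) (hv : 4 ≤ v) (hve : Even v) (i : Fin (m + 4)) :
    #{k | (i : ℕ) - 1 < P k i} ≤ v / 2 := by
  have hhalf : #{k : Fin v | (k : ℕ) < v / 2} = v / 2 := by
    rw [Fin.card_filter_val_lt]; omega
  have hhalf' : #{k : Fin v | ¬ (k : ℕ) < v / 2} = v / 2 := by
    have := card_filter_add_card_filter_not (s := univ) fun k : Fin v => (k : ℕ) < v / 2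
    rw [card_univ, Fintype.card_fin, hhalf] at this
    obtain ⟨w, rfl⟩ := hve
    omega
  rcases (by omega : (i : ℕ) = 0 ∨ (i : ℕ) = 1 ∨ (i : ℕ) = 2 ∨ 3 ≤ (i : ℕ)) with hi | hi | hi | hi
  · obtain rfl : i = 0 := Fin.ext hi
    refine hhalf' ▸ card_le_card (monotone_filter_right _ fun k _ hk => ?_)
    have := (hP.positions k).1
    simp only [Fin.val_zero] at hk
    omega
  · obtain rfl : i = 1 := Fin.ext hi
    refine hhalf ▸ card_le_card (monotone_filter_right _ fun k _ hk => ?_)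
    have := (hP.positions k).2.1
    simp only [Fin.val_one] at hk
    omega
  · obtain rfl : i = 2 := Fin.ext (by rw [hi, Fin.val_two])
    have hsub : ({k | 2 - 1 < (P k 2 : ℕ)} : Finset (Fin v)) ⊆
        {⟨v / 2 - 1, by omega⟩, ⟨v / 2, by omega⟩} := by
      intro k hk
      have := (hP.positions k).2.2.1
      simp only [mem_filter, mem_univ, true_and] at hk
      simp only [mem_insert, mem_singleton, Fin.ext_iff]
      omega
    exact (card_le_card hsub).trans (card_le_two.trans (by omega))
  · simp [hP.tail _ i hi]

/-- `i - 1` truncates: tasks `0` and `1` both have the median completion time of slot `0`. -/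
theorem med_ctime (hP : IsProfile m v P) (hpr : 1 ≤ pr) (hv : 4 ≤ v) (hve : Even v)
    (i : Fin (m + 4)) :
    med v (fun k => Ctime (taskLength m pr) (P k) i) = finishTime [0, 1, m + 3] pr (i - 1) := by
  simp_rw [hP.ctime]
  exact med_comp_eq_of_monotone (by omega) (finishTime_mono _ (by exact_mod_cast hpr)) _ _
    (hP.sub_one_le · i) (hP.card_sub_one_lt_le hv hve i)

theorem sum_dev_one (hP : IsProfile m v P) (hpr : 1 ≤ pr) (hv : 4 ≤ v) (hve : Even v) :
    ∑ k, Dev (taskLength m pr) 1 (P k) = (v : ℝ) * pr * (m + 4) + v * (m + 4) - 3 * v - 4 * pr := by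
  obtain ⟨h₁, h₂, h₃, h₄⟩ := hP
  rw [Fin.sum_four_blocks (by omega) _ _ _ _ _ (fun k hk => (h₁ k hk).dev_one (slots_perm_type₁ m))
    (fun k hk => (h₂ k hk).dev_one (.refl _)) (fun k hk => (h₃ k hk).dev_one (slots_perm_type₃ m))
    (fun k hk => (h₄ k hk).dev_one (slots_perm_type₄ m))]
  have hprR : (1 : ℝ) ≤ pr := by exact_mod_cast hpr
  have hm : (0 : ℝ) ≤ m := m.cast_nonneg
  have d₁ : |(pr : ℝ) - 2 * pr| = pr := by rw [abs_of_nonpos (by linarith)]; ring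
  have d₂ : |2 * (pr : ℝ) - pr| = pr := by rw [abs_of_nonneg (by linarith)]; ring
  have d₃ : |3 * (pr : ℝ) - 2 * pr| = pr := by rw [abs_of_nonneg (by linarith)]; ring
  have d₄ : |(pr : ℝ) - (3 * pr + m + 1)| = 2 * pr + m + 1 := by
    rw [abs_of_nonpos (by linarith)]; ring
  have d₅ : |2 * (pr : ℝ) - (3 * pr + m + 1)| = pr + m + 1 := by
    rw [abs_of_nonpos (by linarith)]; ring
  have d₆ : |3 * (pr : ℝ) - (3 * pr + m + 1)| = m + 1 := by
    rw [abs_of_nonpos (by linarith)]; ring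
  simp only [finishTime_slots_zero, finishTime_slots_one, finishTime_slots_last, sub_self,
    abs_zero, d₁, d₂, d₃, d₄, d₅, d₆]
  obtain ⟨w, rfl⟩ := hve
  rw [show (w + w) / 2 = w by omega, show w + w - w - 1 = w - 1 by omega,
    Nat.cast_sub (by omega : 1 ≤ w)]
  push_cast
  ring

theorem sum_dev_of_isVoterOrder (hP : IsProfile m v P) (hpr : 1 ≤ pr) (hv : 4 ≤ v) (hve : Even v)
    {T : Equiv.Perm (Fin (m + 4))} (hT : IsVoterOrder T 0 (m + 3) 1) :
    ∑ k, Dev (taskLength m pr) T (P k) =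
      2 * pr * v + (v : ℝ) * (m + 4) - 3 * v + 2 * pr + 2 * (m + 4) - 6 := by
  obtain ⟨h₁, h₂, h₃, h₄⟩ := hP
  rw [Fin.sum_four_blocks (by omega) _ _ _ _ _
    (fun k hk => hT.dev (slots_perm_type₁ m) (h₁ k hk) (slots_perm_type₁ m))
    (fun k hk => hT.dev (slots_perm_type₁ m) (h₂ k hk) (.refl _))
    (fun k hk => hT.dev (slots_perm_type₁ m) (h₃ k hk) (slots_perm_type₃ m))
    (fun k hk => hT.dev (slots_perm_type₁ m) (h₄ k hk) (slots_perm_type₄ m))]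
  have hprR : (1 : ℝ) ≤ pr := by exact_mod_cast hpr
  have hm : (0 : ℝ) ≤ m := m.cast_nonneg
  have d₁ : |(pr : ℝ) - 2 * pr| = pr := by rw [abs_of_nonpos (by linarith)]; ring
  have d₂ : |(pr : ℝ) - (3 * pr + m + 1)| = 2 * pr + m + 1 := by
    rw [abs_of_nonpos (by linarith)]; ring
  have d₃ : |2 * (pr : ℝ) - (3 * pr + m + 1)| = pr + m + 1 := by
    rw [abs_of_nonpos (by linarith)]; ring
  simp only [finishTime_slots_zero, finishTime_slots_one, finishTime_slots_last, sub_self,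
    abs_zero, abs_sub_comm _ (pr : ℝ), abs_sub_comm (3 * (pr : ℝ) + m + 1), d₁, d₂, d₃]
  obtain ⟨w, rfl⟩ := hve
  rw [show (w + w) / 2 = w by omega, show w + w - w - 1 = w - 1 by omega,
    Nat.cast_sub (by omega : 1 ≤ w)]
  push_cast
  ring

end IsProfile

theorem eq_taskLength {m pr : ℕ} {p : Fin (m + 4) → ℝ} (h₀ : p 0 = pr) (h₁ : p 1 = pr)
    (h₂ : p 2 = pr) (h₃ : ∀ j : Fin (m + 4), 3 ≤ (j : ℕ) → p j = 1) : p = taskLength m pr := by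
  funext j
  unfold taskLength
  split_ifs with hj
  · rcases (by omega : (j : ℕ) = 0 ∨ (j : ℕ) = 1 ∨ (j : ℕ) = 2) with hj | hj | hj
    · rwa [show j = 0 from Fin.ext hj]
    · rwa [show j = 1 from Fin.ext hj]
    · rwa [show j = 2 from Fin.ext (by rw [hj, Fin.val_two])]
  · exact h₃ j (by omega)

theorem exists_deviation_gt_mul (α : ℝ) : ∃ pr m v : ℕ, 1 ≤ pr ∧ 4 ≤ v ∧ Even v ∧
    (v : ℝ) * pr * (m + 4) + v * (m + 4) - 3 * v - 4 * pr >
      α * (2 * pr * v + (v : ℝ) * (m + 4) - 3 * v + 2 * pr + 2 * (m + 4) - 6) := by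
  set A := ⌈α⌉₊
  refine ⟨4 * A + 1, 4 * A + 1, 4, by omega, le_rfl, even_two_mul 2, ?_⟩
  have hαA : α ≤ A := Nat.le_ceil α
  have hA : (0 : ℝ) ≤ A := A.cast_nonneg
  push_cast
  nlinarith

/-- LMT is not `α`-approximate for any `α ≥ 1`.  In the family of instances with `n = m+4`
tasks (tasks `0,1,2` of length `pr` and the rest of length `1`) and `v` even voters
(`v/2 − 1` of type 1: `t₁,t₃,t₄,…,tₙ,t₂`; one of type 2: `t₁,t₂,t₄,…,tₙ,t₃`; one of
type 3: `t₂,t₁,t₄,…,tₙ,t₃`; `v/2 − 1` of type 4: `t₂,t₃,t₄,…,tₙ,t₁`), the identity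
schedule `t₁,t₂,t₃,t₄,…,tₙ` orders tasks by nondecreasing median completion time (so it is
an LMT output) and has total absolute deviation `v·pr·n + v·n − 3v − 4pr`, while the
schedule `t₁,t₃,t₄,…,tₙ,t₂` has total deviation `2pr·v + v·n − 3v + 2pr + 2n − 6`; the
ratio of these two values is unbounded as `pr, n, v → ∞`. -/
theorem stmt14 :
    (∀ (pr m v : ℕ), 1 ≤ pr → 4 ≤ v → Even v →
      ∀ (p : Fin (m + 4) → ℝ),
        p 0 = pr → p 1 = pr → p 2 = pr →
        (∀ j : Fin (m + 4), 3 ≤ (j : ℕ) → p j = 1) →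
      ∀ (P : Fin v → Equiv.Perm (Fin (m + 4))),
        (∀ k : Fin v, (k : ℕ) < v / 2 - 1 →
          ((P k 0 : ℕ) = 0 ∧ (P k 1 : ℕ) = m + 3 ∧ (P k 2 : ℕ) = 1 ∧
            ∀ j : Fin (m + 4), 3 ≤ (j : ℕ) → (P k j : ℕ) = (j : ℕ) - 1)) →
        (∀ k : Fin v, (k : ℕ) = v / 2 - 1 →
          ((P k 0 : ℕ) = 0 ∧ (P k 1 : ℕ) = 1 ∧ (P k 2 : ℕ) = m + 3 ∧
            ∀ j : Fin (m + 4), 3 ≤ (j : ℕ) → (P k j : ℕ) = (j : ℕ) - 1)) →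
        (∀ k : Fin v, (k : ℕ) = v / 2 →
          ((P k 0 : ℕ) = 1 ∧ (P k 1 : ℕ) = 0 ∧ (P k 2 : ℕ) = m + 3 ∧
            ∀ j : Fin (m + 4), 3 ≤ (j : ℕ) → (P k j : ℕ) = (j : ℕ) - 1)) →
        (∀ k : Fin v, v / 2 < (k : ℕ) →
          ((P k 0 : ℕ) = m + 3 ∧ (P k 1 : ℕ) = 0 ∧ (P k 2 : ℕ) = 1 ∧
            ∀ j : Fin (m + 4), 3 ≤ (j : ℕ) → (P k j : ℕ) = (j : ℕ) - 1)) →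
        (∀ i j : Fin (m + 4), i ≤ j →
          med v (fun k => Ctime p (P k) i) ≤ med v (fun k => Ctime p (P k) j)) ∧
        (∑ k, Dev p 1 (P k)) =
          (v : ℝ) * pr * (m + 4) + v * (m + 4) - 3 * v - 4 * pr ∧
        (∀ Salt : Equiv.Perm (Fin (m + 4)),
          (Salt 0 : ℕ) = 0 → (Salt 1 : ℕ) = m + 3 → (Salt 2 : ℕ) = 1 →
          (∀ j : Fin (m + 4), 3 ≤ (j : ℕ) → (Salt j : ℕ) = (j : ℕ) - 1) →
          (∑ k, Dev p Salt (P k)) =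
            2 * pr * v + (v : ℝ) * (m + 4) - 3 * v + 2 * pr + 2 * (m + 4) - 6)) ∧
    (∀ α : ℝ, 1 ≤ α → ∃ pr m v : ℕ, 1 ≤ pr ∧ 4 ≤ v ∧ Even v ∧
      (v : ℝ) * pr * (m + 4) + v * (m + 4) - 3 * v - 4 * pr >
        α * (2 * pr * v + (v : ℝ) * (m + 4) - 3 * v + 2 * pr + 2 * (m + 4) - 6)) := by
  refine ⟨fun pr m v hpr hv hve p hp₀ hp₁ hp₂ hp₃ P hP₁ hP₂ hP₃ hP₄ => ?_,
    fun α _ => exists_deviation_gt_mul α⟩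
  obtain rfl := eq_taskLength hp₀ hp₁ hp₂ hp₃
  have hP : IsProfile m v P := ⟨hP₁, hP₂, hP₃, hP₄⟩
  refine ⟨fun i j hij => ?_, hP.sum_dev_one hpr hv hve,
    fun S hS₀ hS₁ hS₂ hS₃ => hP.sum_dev_of_isVoterOrder hpr hv hve ⟨hS₀, hS₁, hS₂, hS₃⟩⟩
  rw [hP.med_ctime hpr hv hve, hP.med_ctime hpr hv hve]
  exact finishTime_mono _ (by exact_mod_cast hpr) (Nat.sub_le_sub_right (Fin.le_def.1 hij) 1)
end

section
/- Consecutive-swap local optimality for PTA Kemeny: if S minimizes the weighted Kendall tau score Δ_PTA(·,P) and tasks a, c are consecutive in S with a immediately before c, then v_a·p_c − v_c·p_a ≥ 0, where v_a (resp. v_c) is the number of voters scheduling a before c (resp. c before a); equivalently v_a ≥ v·p_a/(p_a+p_c), so a must precede c in every PTA Condorcet consistent schedule. -/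
open Finset

theorem swap_lt_swap_iff_of_val_eq_succ {n : ℕ} {i j : Fin n} (hij : (j : ℕ) = i + 1)
    {u w : Fin n} (h : ¬(u = i ∧ w = j)) (h' : ¬(u = j ∧ w = i)) :
    Equiv.swap i j u < Equiv.swap i j w ↔ u < w := by
  simp only [Equiv.swap_apply_def]
  split_ifs <;> simp only [Fin.lt_def, Fin.ext_iff] at * <;> omega

theorem sum_sum_sub_sum_sum_eq_of_eq_off_pair {α M : Type*} [Fintype α] [DecidableEq α]
    [AddCommGroup M] (f g : α → α → M) {a c : α} (hac : a ≠ c)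
    (h : ∀ x y, ¬(x = a ∧ y = c) → ¬(x = c ∧ y = a) → f x y = g x y) :
    ∑ x, ∑ y, f x y - ∑ x, ∑ y, g x y = (f a c - g a c) + (f c a - g c a) := by
  rw [← Fintype.sum_prod_type', ← Fintype.sum_prod_type', ← sum_sub_distrib,
    sum_eq_add_of_mem (a, c) (c, a) (mem_univ _) (mem_univ _) (by simp [hac])]
  rintro ⟨x, y⟩ - hxy
  simp only [ne_eq, Prod.mk.injEq] at hxy
  rw [h x y hxy.1 hxy.2, sub_self]

theorem card_filter_lt_add_card_filter_gt {ι β α : Type*} [Fintype ι] [LinearOrder α]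
    (f : ι → β → α) (hf : ∀ k, Function.Injective (f k)) {a c : β} (hac : a ≠ c) :
    #{k | f k a < f k c} + #{k | f k c < f k a} = Fintype.card ι := by
  have hgt : univ.filter (fun k => f k c < f k a) = univ.filter (fun k => ¬ f k a < f k c) := by
    ext k
    simp only [mem_filter, mem_univ, true_and, not_lt]
    exact ⟨le_of_lt, fun hle => hle.lt_of_ne fun he => hac (hf k he.symm)⟩
  rw [hgt, card_filter_add_card_filter_not, card_univ]

theorem deltaPTA_mul_swap_sub {n v : ℕ} (p : Fin n → ℝ) (P : Fin v → Equiv.Perm (Fin n))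
    (S : Equiv.Perm (Fin n)) {a c : Fin n} (hadj : (S c : ℕ) = S a + 1) :
    deltaPTA p P (S * Equiv.swap a c) - deltaPTA p P S =
      #{k | P k a < P k c} * p c - #{k | P k c < P k a} * p a := by
  have hac : a ≠ c := by rintro rfl; omega
  have hSac : S a < S c := by rw [Fin.lt_def]; omega
  have hT : ∀ x, (S * Equiv.swap a c) x = Equiv.swap (S a) (S c) (S x) := fun x => by
    rw [Equiv.mul_swap_eq_swap_mul, Equiv.Perm.mul_apply]
  have hpair : ∀ k, ∑ x, ∑ y, (if (S * Equiv.swap a c) x < (S * Equiv.swap a c) y ∧ P k y < P k x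
        then p x else 0) - ∑ x, ∑ y, (if S x < S y ∧ P k y < P k x then p x else 0) =
      (if P k a < P k c then p c else 0) - (if P k c < P k a then p a else 0) := by
    intro k
    rw [sum_sum_sub_sum_sum_eq_of_eq_off_pair _ _ hac]
    · simp only [hT, Equiv.swap_apply_left, Equiv.swap_apply_right, hSac, hSac.not_gt, true_and,
        false_and, if_false, zero_sub, sub_zero]
      ring
    · intro x y hxy hyx
      have hxy' : ¬(S x = S a ∧ S y = S c) := by simpa using hxy
      have hyx' : ¬(S x = S c ∧ S y = S a) := by simpa using hyx
      simp only [hT, swap_lt_swap_iff_of_val_eq_succ hadj hxy' hyx']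
  unfold deltaPTA
  rw [← sum_sub_distrib, sum_congr rfl fun k _ => hpair k, sum_sub_distrib, sum_ite, sum_ite]
  simp

theorem div_add_mul_add_le_of_mul_le {x y s t : ℝ} (hxy : 0 < x + y) (h : t * x ≤ s * y) :
    x / (x + y) * (s + t) ≤ s := by
  rw [div_mul_eq_mul_div, div_le_iff₀ hxy]
  linarith

/-- Consecutive-swap local optimality for PTA Kemeny: if `S` minimizes the weighted Kendall
tau score and `a` is immediately before `c` in `S`, then `v_a·p_c − v_c·p_a ≥ 0`, i.e.
`v_a ≥ v·p_a/(p_a+p_c)`, so `a` precedes `c` in every PTA Condorcet consistent schedule. -/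
theorem stmt17 {n v : ℕ} (p : Fin n → ℝ) (hp : ∀ i, 0 < p i)
    (P : Fin v → Equiv.Perm (Fin n)) (S : Equiv.Perm (Fin n))
    (hmin : ∀ S', deltaPTA p P S ≤ deltaPTA p P S')
    (a c : Fin n) (hadj : (S c : ℕ) = (S a : ℕ) + 1) :
    ((Finset.univ.filter (fun k => P k c < P k a)).card : ℝ) * p a ≤
      ((Finset.univ.filter (fun k => P k a < P k c)).card : ℝ) * p c ∧
    p a / (p a + p c) * v ≤ ((Finset.univ.filter (fun k => P k a < P k c)).card : ℝ) ∧
    (∀ S₀, PTACondorcet p P S₀ → S₀ a < S₀ c) := by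
  have hac : a ≠ c := by rintro rfl; omega
  have hlocal : (#{k | P k c < P k a} : ℝ) * p a ≤ #{k | P k a < P k c} * p c := by
    linarith [hmin (S * Equiv.swap a c), deltaPTA_mul_swap_sub p P S hadj]
  have hthreshold : p a / (p a + p c) * v ≤ #{k | P k a < P k c} := by
    have h := div_add_mul_add_le_of_mul_le (add_pos (hp a) (hp c)) hlocal
    rwa [← Nat.cast_add, card_filter_lt_add_card_filter_gt (fun k => P k)
      (fun k => (P k).injective) hac, Fintype.card_fin] at h
  exact ⟨hlocal, hthreshold, fun S₀ hS₀ => hS₀ a c hac hthreshold⟩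
end
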